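/- arXiv:2002.09038 — 4 statements merged into one kernel-verified Lean document; each statement's English description precedes it below -/
import Mathlib

section
/- Let S_t ≥ 0 be a nonnegative stochastic process adapted to a filtration {F_t}, with S_t ≤ B for some B ≥ 1, and let m_t = E[S_t | F_{t−1}]. Then for any T ≥ 1, with probability at least 1−δ, ∑_{t=1}^T m_t ≤ 2 ∑_{t=1}^T S_t + 4B log(1/δ) + 8B log(4B) + 1, and consequently ∑_{t=1}^T m_t ≤ 2 ∑_{t=1}^T S_t + 8B log(6B/δ). -/
open MeasureTheory

private lemma exp_neg_le_one_sub_half {x : ℝ} (h0 : 0 ≤ x) (h1 : x ≤ 1) :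
    Real.exp (-x) ≤ 1 - x / 2 := by
  have h := Real.add_one_le_exp x
  have hp := Real.exp_pos x
  have hi : Real.exp x * Real.exp (-x) = 1 := by
    rw [← Real.exp_add]; simp
  have hnp := Real.exp_pos (-x)
  nlinarith [mul_pos hp hnp, sq_nonneg x]

/-- Concentration of the conditional mean (Lemma 3 of Kirschner & Krause, 2018): for a
nonnegative adapted process `S_t ≤ B` with `B ≥ 1` and `m_t = E[S_t | F_{t−1}]`, for any
`T ≥ 1`, with probability at least `1 − δ`,
`∑_{t=1}^T m_t ≤ 2 ∑_{t=1}^T S_t + 4B log(1/δ) + 8B log(4B) + 1`, and consequently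
`∑_{t=1}^T m_t ≤ 2 ∑_{t=1}^T S_t + 8B log(6B/δ)`. -/
theorem conditional_mean_concentration {Ω : Type*} {m0 : MeasurableSpace Ω}
    (μ : Measure Ω) [IsProbabilityMeasure μ] (ℱ : Filtration ℕ m0)
    (S : ℕ → Ω → ℝ) (hadapt : Adapted ℱ S) (B : ℝ) (hB : 1 ≤ B)
    (hS : ∀ t, ∀ᵐ ω ∂μ, 0 ≤ S t ω ∧ S t ω ≤ B)
    (δ : ℝ) (hδ : 0 < δ) (hδ1 : δ < 1) (T : ℕ) (hT : 1 ≤ T) :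
    ENNReal.ofReal (1 - δ) ≤
      μ {ω | (∑ t ∈ Finset.Icc 1 T, (μ[S t|ℱ (t - 1)]) ω ≤
          2 * ∑ t ∈ Finset.Icc 1 T, S t ω +
            4 * B * Real.log (1 / δ) + 8 * B * Real.log (4 * B) + 1) ∧
        ∑ t ∈ Finset.Icc 1 T, (μ[S t|ℱ (t - 1)]) ω ≤
          2 * ∑ t ∈ Finset.Icc 1 T, S t ω + 8 * B * Real.log (6 * B / δ)} := by
  have hBpos : (0:ℝ) < B := lt_of_lt_of_le one_pos hB
  set g : ℕ → Ω → ℝ := fun t => μ[S t|ℱ (t - 1)] with hgdef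
  have hle : ∀ n : ℕ, ℱ n ≤ m0 := fun n => ℱ.le n
  have hSmeas : ∀ t, StronglyMeasurable (S t) := fun t => ((hadapt t).mono (hle t) le_rfl).stronglyMeasurable
  have hSint : ∀ t, Integrable (S t) μ := by
    intro t
    refine Integrable.mono' (integrable_const B) (hSmeas t).aestronglyMeasurable ?_
    filter_upwards [hS t] with ω h
    rw [Real.norm_eq_abs, abs_le]
    exact ⟨by linarith [h.1], h.2⟩
  have hgmeas : ∀ t, StronglyMeasurable[ℱ (t-1)] (g t) := fun t => stronglyMeasurable_condExp
  have hgint : ∀ t, Integrable (g t) μ := fun t => integrable_condExp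
  have hgbd : ∀ t, ∀ᵐ ω ∂μ, 0 ≤ g t ω ∧ g t ω ≤ B := by
    intro t
    have h1 : (0 : Ω → ℝ) ≤ᵐ[μ] g t :=
      condExp_nonneg (by filter_upwards [hS t] with ω h using h.1)
    have h2 : g t ≤ᵐ[μ] μ[(fun _ => B)|ℱ (t-1)] :=
      condExp_mono (hSint t) (integrable_const B)
        (by filter_upwards [hS t] with ω h using h.2)
    rw [condExp_const (hle _)] at h2
    filter_upwards [h1, h2] with ω ha hb using ⟨ha, hb⟩
  -- the exponential process
  set Z : ℕ → Ω → ℝ := fun n ω => ∑ t ∈ Finset.Icc 1 n, (g t ω * (2*B)⁻¹ - S t ω * B⁻¹)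
    with hZdef
  have hZmeas : ∀ n, StronglyMeasurable[ℱ n] (Z n) := by
    intro n
    apply Finset.stronglyMeasurable_fun_sum
    intro t ht
    simp only [Finset.mem_Icc] at ht
    exact (((hgmeas t).mono (ℱ.mono (by omega))).mul_const _).sub
      (((hadapt t).stronglyMeasurable.mono (ℱ.mono ht.2)).mul_const _)
  have hZbd : ∀ n, ∀ᵐ ω ∂μ, |Z n ω| ≤ 2 * n := by
    intro n
    have := (ae_all_iff.2 hS).and (ae_all_iff.2 hgbd)
    filter_upwards [this] with ω ⟨h1, h2⟩
    calc |Z n ω| ≤ ∑ t ∈ Finset.Icc 1 n, |g t ω * (2*B)⁻¹ - S t ω * B⁻¹| :=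
          Finset.abs_sum_le_sum_abs _ _
      _ ≤ ∑ t ∈ Finset.Icc 1 n, 2 := by
          apply Finset.sum_le_sum
          intro t _
          have hg1 := (h2 t).1; have hg2 := (h2 t).2
          have hs1 := (h1 t).1; have hs2 := (h1 t).2
          have e1 : g t ω * (2*B)⁻¹ ≤ 1 := by
            rw [← div_eq_mul_inv, div_le_one (by linarith)]; linarith
          have e2 : S t ω * B⁻¹ ≤ 1 := by
            rw [← div_eq_mul_inv, div_le_one hBpos]; linarith
          have e3 : 0 ≤ g t ω * (2*B)⁻¹ := by positivity
          have e4 : 0 ≤ S t ω * B⁻¹ := by positivity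
          rw [abs_le]; constructor <;> linarith
      _ ≤ 2 * n := by simp [Nat.Icc_eq_range', mul_comm]
  have hexpZmeas : ∀ n, StronglyMeasurable (fun ω => Real.exp (Z n ω)) :=
    fun n => Real.continuous_exp.comp_stronglyMeasurable ((hZmeas n).mono (hle n))
  have hexpZint : ∀ n, Integrable (fun ω => Real.exp (Z n ω)) μ := by
    intro n
    refine Integrable.mono' (integrable_const (Real.exp (2*n)))
      (hexpZmeas n).aestronglyMeasurable ?_
    filter_upwards [hZbd n] with ω h
    rw [Real.norm_eq_abs, abs_of_pos (Real.exp_pos _)]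
    exact Real.exp_le_exp.2 (le_trans (le_abs_self _) h)
  -- key supermartingale bound
  have key : ∀ n, ∫ ω, Real.exp (Z n ω) ∂μ ≤ 1 := by
    intro n
    induction n with
    | zero => simp [hZdef]
    | succ n ih =>
      set F : Ω → ℝ := fun ω => Real.exp (Z n ω + g (n+1) ω * (2*B)⁻¹) with hFdef
      set e : Ω → ℝ := fun ω => Real.exp (-(S (n+1) ω * B⁻¹))  with hedef
      have hsplit : ∀ ω, Real.exp (Z (n+1) ω) = F ω * e ω := by
        intro ω
        rw [hFdef, hedef]
        simp only [← Real.exp_add]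
        congr 1
        simp only [hZdef]
        rw [Finset.sum_Icc_succ_top (by omega : 1 ≤ n + 1)]
        ring
      have hFmeas : StronglyMeasurable[ℱ n] F := by
        apply Real.continuous_exp.comp_stronglyMeasurable
        exact (hZmeas n).add ((hgmeas (n+1)).mul_const _)
      have hemeas : StronglyMeasurable e :=
        Real.continuous_exp.comp_stronglyMeasurable
          (((hSmeas (n+1)).mul_const _).neg)
      have hebd : ∀ᵐ ω ∂μ, e ω ≤ 1 ∧ 0 < e ω := by
        filter_upwards [hS (n+1)] with ω h
        refine ⟨?_, Real.exp_pos _⟩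
        rw [hedef]
        calc Real.exp (-(S (n+1) ω * B⁻¹)) ≤ Real.exp 0 := by
              apply Real.exp_le_exp.2
              simp only [neg_nonpos]
              exact mul_nonneg h.1 (inv_nonneg.2 hBpos.le)
          _ = 1 := Real.exp_zero
      have heint : Integrable e μ := by
        refine Integrable.mono' (integrable_const 1) hemeas.aestronglyMeasurable ?_
        filter_upwards [hebd] with ω ⟨h1, h2⟩
        rw [Real.norm_eq_abs, abs_of_pos h2]; exact h1
      have hFbd : ∀ᵐ ω ∂μ, F ω ≤ Real.exp (2*n + 1) := by
        filter_upwards [hZbd n, hgbd (n+1)] with ω h1 h2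
        apply Real.exp_le_exp.2
        have : g (n+1) ω * (2*B)⁻¹ ≤ 1 := by
          rw [← div_eq_mul_inv, div_le_one (by linarith)]; linarith [h2.2]
        linarith [le_trans (le_abs_self _) h1]
      have hFeint : Integrable (F * e) μ := by
        refine Integrable.mono' (integrable_const (Real.exp (2*n + 1)))
          ((hFmeas.mono (hle n)).mul hemeas).aestronglyMeasurable ?_
        filter_upwards [hFbd, hebd] with ω h1 ⟨h2, h3⟩
        rw [Pi.mul_apply, Real.norm_eq_abs, abs_of_pos (mul_pos (Real.exp_pos _) h3)]
        calc F ω * e ω ≤ F ω * 1 :=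
              mul_le_mul_of_nonneg_left h2 (Real.exp_pos _).le
          _ ≤ Real.exp (2*n+1) := by rw [mul_one]; exact h1
      -- condexp bound on e
      have hcond : μ[e|ℱ n] ≤ᵐ[μ] fun ω => Real.exp (-(g (n+1) ω * (2*B)⁻¹)) := by
        have step1 : e ≤ᵐ[μ] fun ω => 1 - S (n+1) ω * (2*B)⁻¹ := by
          filter_upwards [hS (n+1)] with ω h
          have hx0 : 0 ≤ S (n+1) ω * B⁻¹ := mul_nonneg h.1 (inv_nonneg.2 hBpos.le)
          have hx1 : S (n+1) ω * B⁻¹ ≤ 1 := by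
            rw [← div_eq_mul_inv, div_le_one hBpos]; exact h.2
          have := exp_neg_le_one_sub_half hx0 hx1
          rw [hedef]
          have heq : S (n+1) ω * (2*B)⁻¹ = (S (n+1) ω * B⁻¹) / 2 := by
            rw [mul_inv]; ring
          rw [heq]
          exact this
        have h2int : Integrable (fun ω => 1 - S (n+1) ω * (2*B)⁻¹) μ := by
          have : (fun ω => 1 - S (n+1) ω * (2*B)⁻¹)
              = (fun _ => (1:ℝ)) - (2*B)⁻¹ • S (n+1) := by
            funext ω; simp [mul_comm]
          rw [this]
          exact (integrable_const 1).sub ((hSint (n+1)).smul _)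
        have step2 : μ[e|ℱ n] ≤ᵐ[μ] μ[fun ω => 1 - S (n+1) ω * (2*B)⁻¹|ℱ n] :=
          condExp_mono heint h2int step1
        have step3 : μ[fun ω => 1 - S (n+1) ω * (2*B)⁻¹|ℱ n]
            =ᵐ[μ] fun ω => 1 - g (n+1) ω * (2*B)⁻¹ := by
          have heq : (fun ω => 1 - S (n+1) ω * (2*B)⁻¹)
              = (fun _ => (1:ℝ)) - (2*B)⁻¹ • S (n+1) := by
            funext ω; simp [mul_comm]
          rw [heq]
          have h4 := condExp_sub (m := ℱ n) (μ := μ) (integrable_const (1:ℝ))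
            ((hSint (n+1)).smul ((2*B)⁻¹))
          refine h4.trans ?_
          have h5 := condExp_smul (m := ℱ n) (μ := μ) ((2*B)⁻¹) (S (n+1))
          rw [condExp_const (hle n)]
          filter_upwards [h5] with ω hω
          have : (n+1) - 1 = n := rfl
          simp only [Pi.sub_apply, Pi.smul_apply, smul_eq_mul] at hω ⊢
          rw [hω, hgdef]
          simp [this, mul_comm]
        refine step2.trans (step3.le.trans ?_)
        apply ae_of_all
        intro ω
        have := Real.add_one_le_exp (-(g (n+1) ω * (2*B)⁻¹))
        simp only
        linarith
      -- putting things together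
      have hpull : μ[F * e|ℱ n] =ᵐ[μ] F * μ[e|ℱ n] :=
        condExp_mul_of_stronglyMeasurable_left hFmeas hFeint heint
      have hintcond : ∫ ω, Real.exp (Z (n+1) ω) ∂μ = ∫ ω, (μ[F * e|ℱ n]) ω ∂μ := by
        rw [integral_condExp (hle n)]
        exact integral_congr_ae (ae_of_all _ fun ω => hsplit ω)
      have hmono : (μ[F * e|ℱ n]) ≤ᵐ[μ] fun ω => Real.exp (Z n ω) := by
        filter_upwards [hpull, hcond] with ω h1 h2
        rw [h1]
        calc F ω * (μ[e|ℱ n]) ω ≤ F ω * Real.exp (-(g (n+1) ω * (2*B)⁻¹)) :=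
              mul_le_mul_of_nonneg_left h2 (Real.exp_pos _).le
          _ = Real.exp (Z n ω) := by
              rw [hFdef, ← Real.exp_add]; congr 1; ring
      calc ∫ ω, Real.exp (Z (n+1) ω) ∂μ = ∫ ω, (μ[F * e|ℱ n]) ω ∂μ := hintcond
        _ ≤ ∫ ω, Real.exp (Z n ω) ∂μ :=
            integral_mono_ae integrable_condExp (hexpZint n) hmono
        _ ≤ 1 := ih
  -- Markov's inequality
  have hδinv : (0:ℝ) < 1/δ := by positivity
  have markov := mul_meas_ge_le_integral_of_nonneg
    (ae_of_all μ fun ω => (Real.exp_pos (Z T ω)).le) (hexpZint T) (1/δ)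
  have hmeasle : (μ {ω | 1/δ ≤ Real.exp (Z T ω)}).toReal ≤ δ := by
    have h1 := le_trans markov (key T)
    have h3 : δ * (1/δ * (μ {ω | 1/δ ≤ Real.exp (Z T ω)}).toReal) ≤ δ * 1 :=
      mul_le_mul_of_nonneg_left h1 hδ.le
    rw [← mul_assoc, mul_one_div_cancel (ne_of_gt hδ), one_mul, mul_one] at h3
    exact h3
  set A : Set Ω := {ω | Z T ω ≤ Real.log (1/δ)} with hAdef
  have hAmeas : MeasurableSet A :=
    measurableSet_le ((hZmeas T).mono (hle T)).measurable measurable_const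
  have hcompl : μ Aᶜ ≤ ENNReal.ofReal δ := by
    have hsub : Aᶜ ⊆ {ω | 1/δ ≤ Real.exp (Z T ω)} := by
      intro ω hω
      simp only [hAdef, Set.mem_compl_iff, Set.mem_setOf_eq, not_le] at hω
      have : 1/δ = Real.exp (Real.log (1/δ)) := (Real.exp_log hδinv).symm
      rw [this]
      exact (Real.exp_le_exp.2 hω.le)
    calc μ Aᶜ ≤ μ {ω | 1/δ ≤ Real.exp (Z T ω)} := measure_mono hsub
      _ ≤ ENNReal.ofReal δ := by
          rw [← ENNReal.ofReal_toReal (measure_ne_top μ _)]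
          exact ENNReal.ofReal_le_ofReal hmeasle
  have hA : ENNReal.ofReal (1 - δ) ≤ μ A := by
    have h1 : μ Aᶜᶜ = 1 - μ Aᶜ := prob_compl_eq_one_sub hAmeas.compl
    rw [compl_compl] at h1
    rw [h1]
    calc ENNReal.ofReal (1 - δ) = 1 - ENNReal.ofReal δ := by
          rw [← ENNReal.ofReal_one, ← ENNReal.ofReal_sub _ hδ.le]
      _ ≤ 1 - μ Aᶜ := tsub_le_tsub_left hcompl 1
  refine le_trans hA (measure_mono ?_)
  -- A is contained in the target set
  intro ω hω
  simp only [hAdef, Set.mem_setOf_eq] at hω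
  -- from Z T ω ≤ log(1/δ) deduce ∑ g ≤ 2 ∑ S + 2B log(1/δ)
  have hsum : ∑ t ∈ Finset.Icc 1 T, g t ω ≤
      2 * ∑ t ∈ Finset.Icc 1 T, S t ω + 2 * B * Real.log (1/δ) := by
    have hZ : Z T ω = (∑ t ∈ Finset.Icc 1 T, g t ω) * (2*B)⁻¹
        - (∑ t ∈ Finset.Icc 1 T, S t ω) * B⁻¹ := by
      simp only [hZdef]
      rw [Finset.sum_sub_distrib, ← Finset.sum_mul, ← Finset.sum_mul]
    have h2B : (0:ℝ) < 2*B := by linarith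
    rw [hZ, ← div_eq_mul_inv, ← div_eq_mul_inv, sub_le_iff_le_add,
      div_le_iff₀ h2B] at hω
    have hbb : (Real.log (1/δ) + (∑ t ∈ Finset.Icc 1 T, S t ω) / B) * (2*B)
        = 2*B*Real.log (1/δ) + 2 * ∑ t ∈ Finset.Icc 1 T, S t ω := by
      field_simp
    rw [hbb] at hω
    linarith
  have hlog1 : 0 < Real.log (1/δ) := Real.log_pos (one_lt_one_div hδ hδ1)
  have hlog4B : 0 < Real.log (4*B) := Real.log_pos (by linarith)
  have hlog6 : Real.log (1/δ) ≤ Real.log (6*B/δ) := by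
    apply Real.log_le_log hδinv
    rw [div_le_div_iff₀ hδ hδ]
    nlinarith
  constructor
  · show ∑ t ∈ Finset.Icc 1 T, g t ω ≤ _
    have : 2 * B * Real.log (1/δ) ≤ 4 * B * Real.log (1/δ) := by nlinarith
    have h8 : 0 ≤ 8 * B * Real.log (4*B) := by positivity
    linarith
  · show ∑ t ∈ Finset.Icc 1 T, g t ω ≤ _
    have : 2 * B * Real.log (1/δ) ≤ 8 * B * Real.log (6*B/δ) := by nlinarith
    linarith
end

section
/- Let X be a finite set, n ≥ 1, M a symmetric positive-definite n×n matrix, w a probability vector in ℝⁿ, ε > 0, and U = {w' in the probability simplex : ‖w'−w‖_M ≤ ε}. For each x ∈ X let f_x, σ_x ∈ ℝⁿ with σ_x ≥ 0 componentwise, let β > 0, and suppose the vectors ucb_x = f̂_x + β σ_x and lcb_x = f̂_x − β σ_x satisfy lcb_x ≤ f_x ≤ ucb_x componentwise. Let x_t = argmax_{x∈X} min_{w'∈U} ⟨w', ucb_x⟩ and let w* ∈ U. Then for every x* ∈ X, min_{w'∈U} ⟨w', f_{x*}⟩ − min_{w'∈U} ⟨w', f_{x_t}⟩ ≤ 2β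 ⟨w*, σ_{x_t}⟩ + 2ε ‖f_{x_t}‖_{M⁻¹}. -/
open scoped Matrix

/-- The probability simplex in `ℝⁿ`. -/
def probSimplex (n : ℕ) : Set (Fin n → ℝ) :=
  {w | (∀ j, 0 ≤ w j) ∧ ∑ j, w j = 1}

/-- The `M`-norm `‖u‖_M = √(uᵀ M u)`. -/
noncomputable def Mnorm {n : ℕ} (M : Matrix (Fin n) (Fin n) ℝ) (u : Fin n → ℝ) : ℝ :=
  Real.sqrt (u ⬝ᵥ M.mulVec u)

/-- The MMD uncertainty set `U = {w' in the simplex : ‖w' − w‖_M ≤ ε}`. -/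
def uncSet {n : ℕ} (M : Matrix (Fin n) (Fin n) ℝ) (w : Fin n → ℝ) (ε : ℝ) :
    Set (Fin n → ℝ) :=
  {w' ∈ probSimplex n | Mnorm M (w' - w) ≤ ε}

/-- The worst-case (robust) value `inf_{w'∈U} ⟨w', v⟩`. -/
noncomputable def robustVal {n : ℕ} (U : Set (Fin n → ℝ)) (v : Fin n → ℝ) : ℝ :=
  sInf ((fun w' => w' ⬝ᵥ v) '' U)

lemma posdef_cauchy_schwarz {n : ℕ} {M : Matrix (Fin n) (Fin n) ℝ} (hM : M.PosDef)
    (u v : Fin n → ℝ) :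
    (u ⬝ᵥ M.mulVec v) * (u ⬝ᵥ M.mulVec v) ≤ (u ⬝ᵥ M.mulVec u) * (v ⬝ᵥ M.mulVec v) := by
  have h := @real_inner_mul_inner_self_le (Fin n → ℝ)
    (M.toSeminormedAddCommGroup hM.posSemidef)
    (M.toInnerProductSpace hM.posSemidef) u v
  change ((M *ᵥ v) ⬝ᵥ star u) * ((M *ᵥ v) ⬝ᵥ star u) ≤
    ((M *ᵥ u) ⬝ᵥ star u) * ((M *ᵥ v) ⬝ᵥ star v) at h
  simp only [star_trivial] at h
  rw [dotProduct_comm (M *ᵥ v) u, dotProduct_comm (M *ᵥ u) u, dotProduct_comm (M *ᵥ v) v] at h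
  exact h

lemma cs_abs {n : ℕ} {M : Matrix (Fin n) (Fin n) ℝ} (hM : M.PosDef) (u v : Fin n → ℝ) :
    |u ⬝ᵥ v| ≤ Real.sqrt (u ⬝ᵥ M.mulVec u) * Real.sqrt (v ⬝ᵥ M⁻¹.mulVec v) := by
  have hdet : M.det ≠ 0 := hM.det_pos.ne'
  have hz : M.mulVec (M⁻¹.mulVec v) = v := by
    rw [Matrix.mulVec_mulVec, Matrix.mul_nonsing_inv _ (isUnit_iff_ne_zero.mpr hdet), Matrix.one_mulVec]
  set z := M⁻¹.mulVec v with hzdef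
  have h1 : u ⬝ᵥ v = u ⬝ᵥ M.mulVec z := by rw [hz]
  have h2 : z ⬝ᵥ M.mulVec z = v ⬝ᵥ M⁻¹.mulVec v := by
    rw [hz, hzdef]; exact dotProduct_comm _ _
  have hcs := posdef_cauchy_schwarz hM u z
  have hnn : 0 ≤ u ⬝ᵥ M.mulVec u := by
    simpa using hM.posSemidef.re_dotProduct_nonneg u
  calc |u ⬝ᵥ v| = Real.sqrt ((u ⬝ᵥ M.mulVec z) * (u ⬝ᵥ M.mulVec z)) := by
        rw [Real.sqrt_mul_self_eq_abs, h1]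
    _ ≤ Real.sqrt ((u ⬝ᵥ M.mulVec u) * (z ⬝ᵥ M.mulVec z)) := Real.sqrt_le_sqrt hcs
    _ = _ := by rw [Real.sqrt_mul hnn, h2]

/-- Instantaneous robust regret bound for the general DRBO step: if `x_t` maximizes the
optimistic robust value and the true sampling distribution `w* ∈ U`, then for every `x*`,
`min_{w'∈U}⟨w', f_{x*}⟩ − min_{w'∈U}⟨w', f_{x_t}⟩ ≤ 2β⟨w*, σ_{x_t}⟩ + 2ε‖f_{x_t}‖_{M⁻¹}`. -/
theorem drbo_instantaneous_regret {X : Type*} [Fintype X] {n : ℕ} (hn : 1 ≤ n)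
    (M : Matrix (Fin n) (Fin n) ℝ) (hM : M.PosDef)
    (w : Fin n → ℝ) (hw : w ∈ probSimplex n) (ε : ℝ) (hε : 0 < ε)
    (f fhat σ : X → Fin n → ℝ) (hσ : ∀ x j, 0 ≤ σ x j) (β : ℝ) (hβ : 0 < β)
    (hlcb : ∀ x j, fhat x j - β * σ x j ≤ f x j)
    (hucb : ∀ x j, f x j ≤ fhat x j + β * σ x j)
    (xt : X)
    (hxt : ∀ x : X,
      robustVal (uncSet M w ε) (fun j => fhat x j + β * σ x j) ≤
        robustVal (uncSet M w ε) (fun j => fhat xt j + β * σ xt j))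
    (wstar : Fin n → ℝ) (hwstar : wstar ∈ uncSet M w ε) :
    ∀ xstar : X,
      robustVal (uncSet M w ε) (f xstar) - robustVal (uncSet M w ε) (f xt) ≤
        2 * β * (wstar ⬝ᵥ σ xt) + 2 * ε * Real.sqrt (f xt ⬝ᵥ M⁻¹.mulVec (f xt)) := by
  intro xstar
  set U := uncSet M w ε with hU
  have hwU : w ∈ U := by
    refine ⟨hw, ?_⟩
    simp [Mnorm, sub_self, hε.le]
  have hUne : U.Nonempty := ⟨w, hwU⟩
  -- bounded below
  have hbdd : ∀ v : Fin n → ℝ, BddBelow ((fun w' => w' ⬝ᵥ v) '' U) := by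
    intro v
    refine ⟨-∑ j, |v j|, ?_⟩
    rintro b ⟨w', hw', rfl⟩
    have hle1 : ∀ j, w' j ≤ 1 := by
      intro j
      have := Finset.single_le_sum (f := w') (fun i _ => hw'.1.1 i) (Finset.mem_univ j)
      simpa [hw'.1.2] using this
    have hterm : ∀ j, -|v j| ≤ w' j * v j := by
      intro j
      have habs : |w' j * v j| ≤ |v j| := by
        rw [abs_mul, abs_of_nonneg (hw'.1.1 j)]
        exact mul_le_of_le_one_left (abs_nonneg _) (hle1 j)
      linarith [neg_abs_le (w' j * v j)]
    calc -∑ j, |v j| = ∑ j, -|v j| := by rw [Finset.sum_neg_distrib]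
      _ ≤ ∑ j, w' j * v j := Finset.sum_le_sum (fun j _ => hterm j)
      _ = w' ⬝ᵥ v := rfl
  -- abbreviations
  set S : ℝ := Real.sqrt (f xt ⬝ᵥ M⁻¹.mulVec (f xt)) with hS
  have hSnn : 0 ≤ S := Real.sqrt_nonneg _
  -- Step 1: robustVal U (f xstar) ≤ robustVal U (ucb xstar)
  have h1 : robustVal U (f xstar) ≤
      robustVal U (fun j => fhat xstar j + β * σ xstar j) := by
    refine le_csInf (hUne.image _) ?_
    rintro b ⟨w', hw', rfl⟩
    refine (csInf_le (hbdd _) ⟨w', hw', rfl⟩).trans ?_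
    exact Finset.sum_le_sum fun j _ =>
      mul_le_mul_of_nonneg_left (hucb xstar j) (hw'.1.1 j)
  -- Step 2 : optimism of xt
  have h2 := hxt xstar
  -- Step 3 : inf ≤ value at wstar
  have h3 : robustVal U (fun j => fhat xt j + β * σ xt j) ≤
      wstar ⬝ᵥ (fun j => fhat xt j + β * σ xt j) :=
    csInf_le (hbdd _) ⟨wstar, hwstar, rfl⟩
  -- Step 4 : ucb ≤ f + 2βσ pointwise under wstar
  have h4 : wstar ⬝ᵥ (fun j => fhat xt j + β * σ xt j) ≤
      wstar ⬝ᵥ f xt + 2 * β * (wstar ⬝ᵥ σ xt) := by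
    have hpt : ∀ j, wstar j * (fhat xt j + β * σ xt j) ≤
        wstar j * (f xt j + 2 * β * σ xt j) := by
      intro j
      have hl := hlcb xt j
      have hwsj : 0 ≤ wstar j := hwstar.1.1 j
      nlinarith [hσ xt j]
    calc wstar ⬝ᵥ (fun j => fhat xt j + β * σ xt j)
        ≤ ∑ j, wstar j * (f xt j + 2 * β * σ xt j) :=
          Finset.sum_le_sum fun j _ => hpt j
      _ = wstar ⬝ᵥ f xt + 2 * β * (wstar ⬝ᵥ σ xt) := by
          simp only [dotProduct, Finset.mul_sum, ← Finset.sum_add_distrib]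
          exact Finset.sum_congr rfl fun j _ => by ring
  -- Step 5 : wstar ⬝ᵥ f xt - 2εS ≤ robustVal U (f xt)
  have h5 : wstar ⬝ᵥ f xt - 2 * ε * S ≤ robustVal U (f xt) := by
    refine le_csInf (hUne.image _) ?_
    rintro b ⟨w', hw', rfl⟩
    have hA : (wstar - w) ⬝ᵥ f xt ≤ ε * S := by
      have hle := (le_abs_self _).trans (cs_abs hM (wstar - w) (f xt))
      have hms : Real.sqrt ((wstar - w) ⬝ᵥ M.mulVec (wstar - w)) ≤ ε := hwstar.2
      calc (wstar - w) ⬝ᵥ f xt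
          ≤ Real.sqrt ((wstar - w) ⬝ᵥ M.mulVec (wstar - w)) * S := hle
        _ ≤ ε * S := mul_le_mul_of_nonneg_right hms hSnn
    have hB : (w - w') ⬝ᵥ f xt ≤ ε * S := by
      have hle := (neg_le_abs _).trans (cs_abs hM (w' - w) (f xt))
      have hms : Real.sqrt ((w' - w) ⬝ᵥ M.mulVec (w' - w)) ≤ ε := hw'.2
      have hneg : (w - w') ⬝ᵥ f xt = -((w' - w) ⬝ᵥ f xt) := by
        rw [← neg_dotProduct]; congr 1; abel
      calc (w - w') ⬝ᵥ f xt = -((w' - w) ⬝ᵥ f xt) := hneg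
        _ ≤ Real.sqrt ((w' - w) ⬝ᵥ M.mulVec (w' - w)) * S := hle
        _ ≤ ε * S := mul_le_mul_of_nonneg_right hms hSnn
    have hsplit : wstar ⬝ᵥ f xt - w' ⬝ᵥ f xt =
        (wstar - w) ⬝ᵥ f xt + (w - w') ⬝ᵥ f xt := by
      rw [← add_dotProduct, ← sub_dotProduct]; congr 1; abel
    linarith
  -- combine
  linarith
end

section
/- Let X be a finite set, n ≥ 1, M a symmetric positive-definite n×n matrix, w a probability vector in ℝⁿ, ε > 0, and U = {w' in the probability simplex : ‖w'−w‖_M ≤ ε}. For each x ∈ X let f_x, σ_x ∈ ℝⁿ with σ_x ≥ 0 componentwise, let β > 0, and suppose ucb_x = f̂_x + β σ_x and lcb_x = f̂_x − β σ_x satisfy lcb_x ≤ f_x ≤ ucb_x componentwise. Let x_t = argmax_{x∈X} min_{w'∈U} ⟨w', ucb_x⟩ and let j_t be an index maximizing the entries of σ_{x_t}. Then for every x ∈ X, min_{w'∈U} ⟨w', f_x⟩ − min_{w'∈U} ⟨w', f_{x_t}⟩ ≤ 2β (σ_{x_t})_{j_t}. -/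
open scoped Matrix

lemma mem_uncSet_self {n : ℕ} (M : Matrix (Fin n) (Fin n) ℝ) (w : Fin n → ℝ)
    (hw : w ∈ probSimplex n) {ε : ℝ} (hε : 0 ≤ ε) : w ∈ uncSet M w ε := by
  refine ⟨hw, ?_⟩
  have : w - w = 0 := by simp
  simp [Mnorm, this, zero_dotProduct, hε]

lemma bdd_below_vals {n : ℕ} (M : Matrix (Fin n) (Fin n) ℝ) (w : Fin n → ℝ) (ε : ℝ)
    (v : Fin n → ℝ) :
    BddBelow ((fun w' => w' ⬝ᵥ v) '' uncSet M w ε) := by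
  refine ⟨-∑ j, |v j|, ?_⟩
  rintro b ⟨w', ⟨⟨hpos, hsum⟩, _⟩, rfl⟩
  simp only [dotProduct]
  have hle1 : ∀ j, w' j ≤ 1 := by
    intro j
    calc w' j ≤ ∑ i, w' i := Finset.single_le_sum (fun i _ => hpos i) (Finset.mem_univ j)
    _ = 1 := hsum
  have : ∀ j ∈ Finset.univ, -|v j| ≤ w' j * v j := by
    intro j _
    rcases le_or_gt 0 (v j) with h | h
    · nlinarith [hpos j, abs_nonneg (v j)]
    · have : |v j| = -v j := abs_of_neg h
      nlinarith [hpos j, hle1 j]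
  calc -∑ j, |v j| = ∑ j, -|v j| := by rw [Finset.sum_neg_distrib]
  _ ≤ ∑ j, w' j * v j := Finset.sum_le_sum this

/-- Instantaneous robust regret bound in the simulator setting: if `x_t` maximizes the
optimistic robust value and `j_t` maximizes the confidence width at `x_t`, then for every
`x`, `min_{w'∈U}⟨w', f_x⟩ − min_{w'∈U}⟨w', f_{x_t}⟩ ≤ 2β (σ_{x_t})_{j_t}`. -/
theorem drbo_simulator_instantaneous_regret {X : Type*} [Fintype X] {n : ℕ} (hn : 1 ≤ n)
    (M : Matrix (Fin n) (Fin n) ℝ) (hM : M.PosDef)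
    (w : Fin n → ℝ) (hw : w ∈ probSimplex n) (ε : ℝ) (hε : 0 < ε)
    (f fhat σ : X → Fin n → ℝ) (hσ : ∀ x j, 0 ≤ σ x j) (β : ℝ) (hβ : 0 < β)
    (hlcb : ∀ x j, fhat x j - β * σ x j ≤ f x j)
    (hucb : ∀ x j, f x j ≤ fhat x j + β * σ x j)
    (xt : X)
    (hxt : ∀ x : X,
      robustVal (uncSet M w ε) (fun j => fhat x j + β * σ x j) ≤
        robustVal (uncSet M w ε) (fun j => fhat xt j + β * σ xt j))
    (jt : Fin n) (hjt : ∀ j, σ xt j ≤ σ xt jt) :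
    ∀ x : X,
      robustVal (uncSet M w ε) (f x) - robustVal (uncSet M w ε) (f xt) ≤
        2 * β * σ xt jt := by
  intro x
  set U := uncSet M w ε with hU
  have hwU : w ∈ U := mem_uncSet_self M w hw hε.le
  have hne : ∀ v : Fin n → ℝ, ((fun w' => w' ⬝ᵥ v) '' U).Nonempty :=
    fun v => ⟨w ⬝ᵥ v, w, hwU, rfl⟩
  have hbdd : ∀ v : Fin n → ℝ, BddBelow ((fun w' => w' ⬝ᵥ v) '' U) :=
    fun v => bdd_below_vals M w ε v
  -- step 1: robustVal U (f x) ≤ robustVal U (ucb x)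
  have h1 : robustVal U (f x) ≤ robustVal U (fun j => fhat x j + β * σ x j) := by
    apply le_csInf (hne _)
    rintro b ⟨w', hw', rfl⟩
    have h2 : robustVal U (f x) ≤ w' ⬝ᵥ f x := csInf_le (hbdd _) ⟨w', hw', rfl⟩
    have h3 : w' ⬝ᵥ f x ≤ w' ⬝ᵥ (fun j => fhat x j + β * σ x j) := by
      apply Finset.sum_le_sum
      intro j _
      exact mul_le_mul_of_nonneg_left (hucb x j) (hw'.1.1 j)
    linarith
  -- step 3: robustVal U (ucb xt) ≤ robustVal U (f xt) + 2βσjt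
  have h3 : robustVal U (fun j => fhat xt j + β * σ xt j) ≤
      robustVal U (f xt) + 2 * β * σ xt jt := by
    have key : robustVal U (fun j => fhat xt j + β * σ xt j) - 2 * β * σ xt jt ≤
        robustVal U (f xt) := by
      apply le_csInf (hne (f xt))
      rintro b ⟨w', hw', rfl⟩
      have h4 : robustVal U (fun j => fhat xt j + β * σ xt j) ≤
          w' ⬝ᵥ (fun j => fhat xt j + β * σ xt j) := csInf_le (hbdd _) ⟨w', hw', rfl⟩
      have h5 : w' ⬝ᵥ (fun j => fhat xt j + β * σ xt j) ≤
          w' ⬝ᵥ f xt + 2 * β * σ xt jt := by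
        have hterm : ∀ j ∈ Finset.univ, w' j * (fhat xt j + β * σ xt j) ≤
            w' j * (f xt j + 2 * β * σ xt jt) := by
          intro j _
          apply mul_le_mul_of_nonneg_left _ (hw'.1.1 j)
          have := hlcb xt j
          have := hjt j
          nlinarith
        calc w' ⬝ᵥ (fun j => fhat xt j + β * σ xt j)
            ≤ ∑ j, w' j * (f xt j + 2 * β * σ xt jt) := Finset.sum_le_sum hterm
          _ = w' ⬝ᵥ f xt + (2 * β * σ xt jt) * ∑ j, w' j := by
              simp only [dotProduct, Finset.mul_sum]
              rw [← Finset.sum_add_distrib]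
              exact Finset.sum_congr rfl fun j _ => by ring
          _ = w' ⬝ᵥ f xt + 2 * β * σ xt jt := by rw [hw'.1.2]; ring
      linarith
    linarith
  linarith [hxt x, h1, h3]
end

section
/- Let n ≥ 1, M a symmetric positive-definite n×n matrix, w a probability vector in ℝⁿ, ε > 0, and U = {w' in the probability simplex : ‖w'−w‖_M ≤ ε}. For each step t = 1,…,T and each x in a finite set X, let f_x, σ^t_x ∈ ℝⁿ with σ^t_x ≥ 0 componentwise, β_t > 0, and suppose ucb^t_x = f̂^t_x + β_t σ^t_x and lcb^t_x = f̂^t_x − β_t σ^t_x satisfy lcb^t_x ≤ f_x ≤ ucb^t_x componentwise. Let x_t = argmax_{x∈X} min_{w'∈U} ⟨w', ucb^t_x⟩, let j_t maximize the entries of σ^t_{x_t}, let t̂ = argmax_{t=1,…,T} min_{w'∈U} ⟨w', lcb^t_{x_t}⟩, and set x̂ = x_{t̂}. Then for every t = 1,…,T, max_{x∈X} min_{w'∈U} ⟨w', f_x⟩ − min_{w'∈U} ⟨w', f_{x̂}⟩ ≤ 2β_t (σ^t_{x_t})_{j_t}; consequently the simple regret of x̂ is at most T⁻¹ ∑_{t=1}^T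 2β_t (σ^t_{x_t})_{j_t}. -/
open scoped Matrix

section Aux

variable {n : ℕ} {U : Set (Fin n → ℝ)}

lemma dot_ge_inf [Nonempty (Fin n)] {w' : Fin n → ℝ} (hw' : w' ∈ probSimplex n)
    (v : Fin n → ℝ) : Finset.univ.inf' Finset.univ_nonempty v ≤ w' ⬝ᵥ v := by
  obtain ⟨hpos, hsum⟩ := hw'
  have : w' ⬝ᵥ v = ∑ j, w' j * v j := rfl
  rw [this]
  calc Finset.univ.inf' Finset.univ_nonempty v
      = (∑ j, w' j) * Finset.univ.inf' Finset.univ_nonempty v := by rw [hsum, one_mul]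
    _ = ∑ j, w' j * Finset.univ.inf' Finset.univ_nonempty v := by rw [Finset.sum_mul]
    _ ≤ ∑ j, w' j * v j := Finset.sum_le_sum fun j _ =>
        mul_le_mul_of_nonneg_left (Finset.inf'_le _ (Finset.mem_univ j)) (hpos j)

lemma image_bddBelow [Nonempty (Fin n)] (hU : U ⊆ probSimplex n) (v : Fin n → ℝ) :
    BddBelow ((fun w' => w' ⬝ᵥ v) '' U) := by
  refine ⟨Finset.univ.inf' Finset.univ_nonempty v, ?_⟩
  rintro a ⟨w', hw', rfl⟩
  exact dot_ge_inf (hU hw') v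

lemma robustVal_mono [Nonempty (Fin n)] (hU : U ⊆ probSimplex n) (hUne : U.Nonempty)
    {v v' : Fin n → ℝ} (h : ∀ j, v j ≤ v' j) : robustVal U v ≤ robustVal U v' := by
  refine le_csInf (hUne.image _) ?_
  rintro b ⟨w', hw', rfl⟩
  refine le_trans (csInf_le (image_bddBelow hU v) ⟨w', hw', rfl⟩) ?_
  show w' ⬝ᵥ v ≤ w' ⬝ᵥ v'
  have h1 : w' ⬝ᵥ v = ∑ j, w' j * v j := rfl
  have h2 : w' ⬝ᵥ v' = ∑ j, w' j * v' j := rfl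
  rw [h1, h2]
  exact Finset.sum_le_sum fun j _ => mul_le_mul_of_nonneg_left (h j) ((hU hw').1 j)

lemma robustVal_add_const_le [Nonempty (Fin n)] (hU : U ⊆ probSimplex n)
    (hUne : U.Nonempty) (v : Fin n → ℝ) (c : ℝ) :
    robustVal U (fun j => v j + c) ≤ robustVal U v + c := by
  rw [← sub_le_iff_le_add]
  refine le_csInf (hUne.image _) ?_
  rintro b ⟨w', hw', rfl⟩
  rw [sub_le_iff_le_add]
  have hdot : w' ⬝ᵥ (fun j => v j + c) = w' ⬝ᵥ v + c := by
    have h1 : w' ⬝ᵥ (fun j => v j + c) = ∑ j, w' j * (v j + c) := rfl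
    have h2 : w' ⬝ᵥ v = ∑ j, w' j * v j := rfl
    rw [h1, h2]
    simp [mul_add, Finset.sum_add_distrib, ← Finset.sum_mul, (hU hw').2]
  calc robustVal U (fun j => v j + c)
      ≤ w' ⬝ᵥ (fun j => v j + c) :=
        csInf_le (image_bddBelow hU _) ⟨w', hw', rfl⟩
    _ = w' ⬝ᵥ v + c := hdot

end Aux

/-- Simple-regret argument for simulator DRBO: the iterate `x̂ = x_{t̂}` with the best
conservative worst-case value has robust simple regret bounded by each per-step
confidence width `2β_t (σ^t_{x_t})_{j_t}`, hence by their time-average. -/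
theorem drbo_simple_regret_core {X : Type*} [Fintype X] [Nonempty X] {n T : ℕ}
    (hn : 1 ≤ n) (M : Matrix (Fin n) (Fin n) ℝ) (hM : M.PosDef)
    (w : Fin n → ℝ) (hw : w ∈ probSimplex n) (ε : ℝ) (hε : 0 < ε)
    (f : X → Fin n → ℝ) (fhat σ : Fin T → X → Fin n → ℝ)
    (hσ : ∀ t x j, 0 ≤ σ t x j) (β : Fin T → ℝ) (hβ : ∀ t, 0 < β t)
    (hlcb : ∀ t x j, fhat t x j - β t * σ t x j ≤ f x j)
    (hucb : ∀ t x j, f x j ≤ fhat t x j + β t * σ t x j)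
    (x : Fin T → X)
    (hx : ∀ (t : Fin T) (x' : X),
      robustVal (uncSet M w ε) (fun j => fhat t x' j + β t * σ t x' j) ≤
        robustVal (uncSet M w ε) (fun j => fhat t (x t) j + β t * σ t (x t) j))
    (jmax : Fin T → Fin n) (hjmax : ∀ t j, σ t (x t) j ≤ σ t (x t) (jmax t))
    (that : Fin T)
    (hthat : ∀ t : Fin T,
      robustVal (uncSet M w ε) (fun j => fhat t (x t) j - β t * σ t (x t) j) ≤
        robustVal (uncSet M w ε)
          (fun j => fhat that (x that) j - β that * σ that (x that) j)) :
    (∀ t : Fin T,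
      (⨆ x' : X, robustVal (uncSet M w ε) (f x')) -
          robustVal (uncSet M w ε) (f (x that)) ≤
        2 * β t * σ t (x t) (jmax t)) ∧
      (⨆ x' : X, robustVal (uncSet M w ε) (f x')) -
          robustVal (uncSet M w ε) (f (x that)) ≤
        (T : ℝ)⁻¹ * ∑ t, 2 * β t * σ t (x t) (jmax t) := by
  have hne : Nonempty (Fin n) := ⟨⟨0, hn⟩⟩
  set U := uncSet M w ε with hUdef
  have hU : U ⊆ probSimplex n := fun w' hw' => hw'.1
  have hwU : w ∈ U := by
    refine ⟨hw, ?_⟩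
    have : w - w = 0 := by simp
    simp [Mnorm, this, dotProduct, le_of_lt hε]
  have hUne : U.Nonempty := ⟨w, hwU⟩
  -- core per-step bound
  have key : ∀ t : Fin T,
      (⨆ x' : X, robustVal U (f x')) - robustVal U (f (x that)) ≤
        2 * β t * σ t (x t) (jmax t) := by
    intro t
    rw [sub_le_iff_le_add]
    refine ciSup_le fun x' => ?_
    have h1 : robustVal U (f x') ≤
        robustVal U (fun j => fhat t x' j + β t * σ t x' j) :=
      robustVal_mono hU hUne (hucb t x')
    have h2 := hx t x'
    have h3 : robustVal U (fun j => fhat t (x t) j + β t * σ t (x t) j) ≤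
        robustVal U (fun j => fhat t (x t) j - β t * σ t (x t) j) +
          2 * β t * σ t (x t) (jmax t) := by
      refine le_trans (robustVal_mono hU hUne (v' := fun j =>
        (fhat t (x t) j - β t * σ t (x t) j) + 2 * β t * σ t (x t) (jmax t)) ?_) ?_
      · intro j
        have := mul_le_mul_of_nonneg_left (hjmax t j) (le_of_lt (hβ t))
        nlinarith
      · exact robustVal_add_const_le hU hUne _ _
    have h4 := hthat t
    have h5 : robustVal U (fun j => fhat that (x that) j - β that * σ that (x that) j) ≤
        robustVal U (f (x that)) :=
      robustVal_mono hU hUne (hlcb that (x that))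
    calc robustVal U (f x') ≤ _ := h1
      _ ≤ _ := h2
      _ ≤ _ := h3
      _ ≤ 2 * β t * σ t (x t) (jmax t) + robustVal U (f (x that)) := by linarith
  refine ⟨key, ?_⟩
  have hT : 0 < T := that.pos
  have hTR : (0:ℝ) < (T:ℝ) := by exact_mod_cast hT
  set R := (⨆ x' : X, robustVal U (f x')) - robustVal U (f (x that)) with hR
  have hsum : (T:ℝ) * R ≤ ∑ t, 2 * β t * σ t (x t) (jmax t) := by
    calc (T:ℝ) * R = ∑ _t : Fin T, R := by
          rw [Finset.sum_const, Finset.card_univ, Fintype.card_fin, nsmul_eq_mul]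
      _ ≤ ∑ t, 2 * β t * σ t (x t) (jmax t) :=
          Finset.sum_le_sum fun t _ => key t
  rw [inv_mul_eq_div, le_div_iff₀ hTR] at *
  linarith [hsum]
end
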